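/- Let f : ℝ² → ℝ be a smooth function and K > 0 a constant such that f_xx f_yy − f_xy² = K at every point of ℝ². Then f is a polynomial of degree at most 2; moreover there exist real numbers θ, a, b, c and α, β with α·β = K/4 > 0 such that for all (x,y), f(x cos θ − y sin θ, x sin θ + y cos θ) = α·x² + β·y² + a·x + b·y + c. (Every complete spacelike surface in 𝕀³ of positive constant Gaussian curvature is an elliptic paraboloid.) -/

import Mathlib

/-- Partial derivative in the first variable. -/
noncomputable def pdx (f : ℝ → ℝ → ℝ) (x y : ℝ) : ℝ := deriv (fun t => f t y) x

/-- Partial derivative in the second variable. -/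
noncomputable def pdy (f : ℝ → ℝ → ℝ) (x y : ℝ) : ℝ := deriv (fun t => f x t) y

/-- Second partial derivative f_xx. -/
noncomputable def fxx (f : ℝ → ℝ → ℝ) (x y : ℝ) : ℝ := pdx (pdx f) x y

/-- Second partial derivative f_xy (first in x, then in y). -/
noncomputable def fxy (f : ℝ → ℝ → ℝ) (x y : ℝ) : ℝ := pdy (pdx f) x y

/-- Second partial derivative f_yy. -/
noncomputable def fyy (f : ℝ → ℝ → ℝ) (x y : ℝ) : ℝ := pdy (pdy f) x y

/-- Gaussian curvature (Hessian determinant) of the graph ℓ = f(x,y) in 𝕀³. -/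
noncomputable def Kgauss (f : ℝ → ℝ → ℝ) (x y : ℝ) : ℝ :=
  fxx f x y * fyy f x y - (fxy f x y) ^ 2



open Real Filter Set

noncomputable section JorgensAux

/-- directional derivative in direction `v`. -/
noncomputable def dv (v : ℝ × ℝ) (u : ℝ × ℝ → ℝ) (p : ℝ × ℝ) : ℝ := fderiv ℝ u p v

noncomputable abbrev d1 := dv (1, 0)
noncomputable abbrev d2 := dv (0, 1)

lemma contDiff_dv {u : ℝ × ℝ → ℝ} (hu : ContDiff ℝ (⊤ : ℕ∞) u) (v : ℝ × ℝ) :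
    ContDiff ℝ (⊤ : ℕ∞) (dv v u) := by
  exact (ContinuousLinearMap.apply ℝ ℝ v).contDiff.comp (hu.fderiv_right (by simp))

lemma hasDerivAt_slice1 {g : ℝ × ℝ → ℝ} (hg : Differentiable ℝ g) (x y : ℝ) :
    HasDerivAt (fun t => g (t, y)) (d1 g (x, y)) x := by
  have h2 : HasDerivAt (fun t : ℝ => ((t, y) : ℝ × ℝ)) ((1 : ℝ), (0 : ℝ)) x :=
    (hasDerivAt_id x).prodMk (hasDerivAt_const x y)
  exact (hg (x, y)).hasFDerivAt.comp_hasDerivAt x h2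

lemma hasDerivAt_slice2 {g : ℝ × ℝ → ℝ} (hg : Differentiable ℝ g) (x y : ℝ) :
    HasDerivAt (fun t => g (x, t)) (d2 g (x, y)) y := by
  have h2 : HasDerivAt (fun t : ℝ => ((x, t) : ℝ × ℝ)) ((0 : ℝ), (1 : ℝ)) y :=
    (hasDerivAt_const y x).prodMk (hasDerivAt_id y)
  exact (hg (x, y)).hasFDerivAt.comp_hasDerivAt y h2

lemma pdx_eq {f : ℝ → ℝ → ℝ} (hf : ContDiff ℝ (⊤ : ℕ∞) (Function.uncurry f)) (x y : ℝ) :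
    pdx f x y = d1 (Function.uncurry f) (x, y) :=
  (hasDerivAt_slice1 (hf.differentiable (by simp)) x y).deriv

lemma pdy_eq {f : ℝ → ℝ → ℝ} (hf : ContDiff ℝ (⊤ : ℕ∞) (Function.uncurry f)) (x y : ℝ) :
    pdy f x y = d2 (Function.uncurry f) (x, y) :=
  (hasDerivAt_slice2 (hf.differentiable (by simp)) x y).deriv

lemma fxx_eq {f : ℝ → ℝ → ℝ} (hf : ContDiff ℝ (⊤ : ℕ∞) (Function.uncurry f)) (x y : ℝ) :
    fxx f x y = d1 (d1 (Function.uncurry f)) (x, y) := by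
  have h : (fun t => pdx f t y) = fun t => d1 (Function.uncurry f) (t, y) :=
    funext fun t => pdx_eq hf t y
  rw [fxx, pdx, h]
  exact (hasDerivAt_slice1 ((contDiff_dv hf _).differentiable (by simp)) x y).deriv

lemma fxy_eq {f : ℝ → ℝ → ℝ} (hf : ContDiff ℝ (⊤ : ℕ∞) (Function.uncurry f)) (x y : ℝ) :
    fxy f x y = d2 (d1 (Function.uncurry f)) (x, y) := by
  have h : (fun t => pdx f x t) = fun t => d1 (Function.uncurry f) (x, t) :=
    funext fun t => pdx_eq hf x t
  rw [fxy, pdy, h]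
  exact (hasDerivAt_slice2 ((contDiff_dv hf _).differentiable (by simp)) x y).deriv

lemma fyy_eq {f : ℝ → ℝ → ℝ} (hf : ContDiff ℝ (⊤ : ℕ∞) (Function.uncurry f)) (x y : ℝ) :
    fyy f x y = d2 (d2 (Function.uncurry f)) (x, y) := by
  have h : (fun t => pdy f x t) = fun t => d2 (Function.uncurry f) (x, t) :=
    funext fun t => pdy_eq hf x t
  rw [fyy, pdy, h]
  exact (hasDerivAt_slice2 ((contDiff_dv hf _).differentiable (by simp)) x y).deriv

/-- `fderiv` of a directional derivative. -/
lemma hasFDerivAt_dv {u : ℝ × ℝ → ℝ} (hu : ContDiff ℝ (⊤ : ℕ∞) u) (v p) :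
    HasFDerivAt (dv v u)
      ((ContinuousLinearMap.apply ℝ ℝ v).comp (fderiv ℝ (fderiv ℝ u) p)) p := by
  have h1 : HasFDerivAt (fderiv ℝ u) (fderiv ℝ (fderiv ℝ u) p) p :=
    (((hu.fderiv_right (m := (⊤ : ℕ∞)) (by simp)).differentiable (by simp)) p).hasFDerivAt
  exact (ContinuousLinearMap.apply ℝ ℝ v).hasFDerivAt.comp p h1

lemma dv_dv {u : ℝ × ℝ → ℝ} (hu : ContDiff ℝ (⊤ : ℕ∞) u) (v w p) :
    dv w (dv v u) p = fderiv ℝ (fderiv ℝ u) p w v := by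
  have := (hasFDerivAt_dv hu v p).fderiv
  simp only [dv, this]; rfl

/-- Symmetry of second derivatives. -/
lemma dv_comm {u : ℝ × ℝ → ℝ} (hu : ContDiff ℝ (⊤ : ℕ∞) u) (v w p) :
    dv w (dv v u) p = dv v (dv w u) p := by
  rw [dv_dv hu, dv_dv hu]
  exact second_derivative_symmetric
    (fun q => ((hu.differentiable (by simp)) q).hasFDerivAt)
    ((((hu.fderiv_right (m := (⊤ : ℕ∞)) (by simp)).differentiable (by simp)) p).hasFDerivAt) w v

end JorgensAux

namespace JorgensAux

/-- expansion of fderiv in coordinates -/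
lemma fderiv_apply_eq {g : ℝ × ℝ → ℝ} {p : ℝ × ℝ} (hg : DifferentiableAt ℝ g p) (w : ℝ × ℝ) :
    fderiv ℝ g p w = w.1 * d1 g p + w.2 * d2 g p := by
  have hw : w = w.1 • ((1 : ℝ), (0 : ℝ)) + w.2 • ((0 : ℝ), (1 : ℝ)) := by
    simp [Prod.ext_iff]
  conv_lhs => rw [hw]
  rw [map_add, map_smul, map_smul]
  simp [dv, smul_eq_mul]

section Core

variable {u : ℝ × ℝ → ℝ} (hu : ContDiff ℝ (⊤ : ℕ∞) u)
  (hpos : ∀ p, 0 < d1 (d1 u) p)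
  (hdet : ∀ p, d1 (d1 u) p * d2 (d2 u) p - (d2 (d1 u) p) ^ 2 = 1)

include hu hpos hdet in
/-- gradient monotonicity from nonneg-definite Hessian -/
lemma grad_mono (p v : ℝ × ℝ) :
    0 ≤ (d1 u (p + v) - d1 u p) * v.1 + (d2 u (p + v) - d2 u p) * v.2 := by
  set φ : ℝ → ℝ := fun τ => d1 u (p + τ • v) * v.1 + d2 u (p + τ • v) * v.2 with hφ
  have hline : ∀ τ : ℝ, HasDerivAt (fun τ : ℝ => p + τ • v) v τ := by
    intro τ
    simpa using ((hasDerivAt_id τ).smul_const v).const_add p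
  have hd1 := (contDiff_dv hu ((1 : ℝ), (0 : ℝ))).differentiable (by simp)
  have hd2 := (contDiff_dv hu ((0 : ℝ), (1 : ℝ))).differentiable (by simp)
  have hder : ∀ τ : ℝ, HasDerivAt φ
      (d1 (d1 u) (p + τ • v) * v.1 ^ 2 + 2 * d2 (d1 u) (p + τ • v) * v.1 * v.2
        + d2 (d2 u) (p + τ • v) * v.2 ^ 2) τ := by
    intro τ
    have h1 : HasDerivAt (fun τ : ℝ => d1 u (p + τ • v))
        (fderiv ℝ (d1 u) (p + τ • v) v) τ :=
      (hd1 _).hasFDerivAt.comp_hasDerivAt τ (hline τ)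
    have h2 : HasDerivAt (fun τ : ℝ => d2 u (p + τ • v))
        (fderiv ℝ (d2 u) (p + τ • v) v) τ :=
      (hd2 _).hasFDerivAt.comp_hasDerivAt τ (hline τ)
    have e1 : fderiv ℝ (d1 u) (p + τ • v) v
        = v.1 * d1 (d1 u) (p + τ • v) + v.2 * d2 (d1 u) (p + τ • v) :=
      fderiv_apply_eq (hd1 _) v
    have e2 : fderiv ℝ (d2 u) (p + τ • v) v
        = v.1 * d1 (d2 u) (p + τ • v) + v.2 * d2 (d2 u) (p + τ • v) :=
      fderiv_apply_eq (hd2 _) v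
    have hcomm : d1 (d2 u) (p + τ • v) = d2 (d1 u) (p + τ • v) := dv_comm hu _ _ _
    have := (h1.mul_const v.1).add (h2.mul_const v.2)
    refine HasDerivAt.congr_deriv this ?_
    rw [e1, e2, hcomm]; ring
  have hmono : Monotone φ := by
    apply monotone_of_deriv_nonneg
    · exact fun τ => (hder τ).differentiableAt
    · intro τ
      rw [(hder τ).deriv]
      have h1 := hpos (p + τ • v)
      have h2 := hdet (p + τ • v)
      nlinarith [sq_nonneg (d1 (d1 u) (p + τ • v) * v.1 + d2 (d1 u) (p + τ • v) * v.2),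
        sq_nonneg v.2, hpos (p + τ • v)]
  have h01 : φ 0 ≤ φ 1 := hmono zero_le_one
  simp only [hφ, zero_smul, one_smul, add_zero] at h01
  nlinarith [h01]

/-- The Lewy transformation. -/
noncomputable def Tmap (u : ℝ × ℝ → ℝ) (p : ℝ × ℝ) : ℝ × ℝ :=
  (p.1 + d1 u p, p.2 + d2 u p)

include hu hpos hdet in
lemma Tmap_expand (p q : ℝ × ℝ) :
    (q.1 - p.1) ^ 2 + (q.2 - p.2) ^ 2
      ≤ ((Tmap u q).1 - (Tmap u p).1) * (q.1 - p.1)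
        + ((Tmap u q).2 - (Tmap u p).2) * (q.2 - p.2) := by
  have h := grad_mono hu hpos hdet p (q - p)
  have hq : p + (q - p) = q := by abel
  rw [hq] at h
  simp only [Tmap, Prod.fst_sub, Prod.snd_sub] at *
  nlinarith [h]

include hu hpos hdet in
lemma Tmap_dist (p q : ℝ × ℝ) :
    (q.1 - p.1) ^ 2 + (q.2 - p.2) ^ 2
      ≤ ((Tmap u q).1 - (Tmap u p).1) ^ 2 + ((Tmap u q).2 - (Tmap u p).2) ^ 2 := by
  have h := Tmap_expand hu hpos hdet p q
  set v1 := q.1 - p.1; set v2 := q.2 - p.2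
  set e1 := (Tmap u q).1 - (Tmap u p).1; set e2 := (Tmap u q).2 - (Tmap u p).2
  rcases eq_or_lt_of_le (by positivity : (0:ℝ) ≤ v1 ^ 2 + v2 ^ 2) with h0 | h0
  · nlinarith [sq_nonneg e1, sq_nonneg e2]
  · -- Cauchy-Schwarz
    nlinarith [sq_nonneg (e1 * v2 - e2 * v1), sq_nonneg (e1 * v1 + e2 * v2), h0, h]

include hu hpos hdet in
lemma Tmap_inj : Function.Injective (Tmap u) := by
  intro p q hpq
  have h := Tmap_dist hu hpos hdet p q
  rw [hpq] at h
  simp only [sub_self] at h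
  have h1 : (q.1 - p.1) ^ 2 + (q.2 - p.2) ^ 2 ≤ 0 := by nlinarith
  have : p.1 = q.1 ∧ p.2 = q.2 := by constructor <;> nlinarith [sq_nonneg (q.1 - p.1), sq_nonneg (q.2 - p.2)]
  exact Prod.ext this.1 this.2

include hu in
lemma Tmap_contDiff : ContDiff ℝ (⊤ : ℕ∞) (Tmap u) := by
  exact (contDiff_fst.add (contDiff_dv hu _)).prodMk (contDiff_snd.add (contDiff_dv hu _))

include hu hpos hdet in
lemma Tmap_dist' (p q : ℝ × ℝ) : dist p q ≤ 2 * dist (Tmap u p) (Tmap u q) := by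
  have h := Tmap_dist hu hpos hdet p q
  have h1 : dist p q = max |q.1 - p.1| |q.2 - p.2| := by
    rw [Prod.dist_eq, dist_comm]
    simp [Real.dist_eq, abs_sub_comm]
  have h2 : dist (Tmap u p) (Tmap u q) = max |(Tmap u q).1 - (Tmap u p).1| |(Tmap u q).2 - (Tmap u p).2| := by
    rw [Prod.dist_eq, dist_comm]
    simp [Real.dist_eq, abs_sub_comm]
  rw [h1, h2]
  set a := |q.1 - p.1|; set b := |q.2 - p.2|
  set c := |(Tmap u q).1 - (Tmap u p).1|; set d := |(Tmap u q).2 - (Tmap u p).2|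
  have ha : (0:ℝ) ≤ a := abs_nonneg _
  have hb : (0:ℝ) ≤ b := abs_nonneg _
  have hc : (0:ℝ) ≤ c := abs_nonneg _
  have hd : (0:ℝ) ≤ d := abs_nonneg _
  have h3 : a ^ 2 + b ^ 2 ≤ c ^ 2 + d ^ 2 := by
    have : a ^ 2 = (q.1 - p.1) ^ 2 := sq_abs _
    have : b ^ 2 = (q.2 - p.2) ^ 2 := sq_abs _
    simp only [a, b, c, d, sq_abs]
    exact h
  have hmax : max a b ≤ 2 * max c d := by
    have hM : (0:ℝ) ≤ max c d := hc.trans (le_max_left c d)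
    rcases max_cases a b with ⟨hm, _⟩ | ⟨hm, _⟩ <;> rw [hm] <;>
      nlinarith [le_max_left c d, le_max_right c d, sq_nonneg a, sq_nonneg b, hc, hd, hM]
  exact hmax

include hu hpos hdet in
lemma Tmap_range_closed : IsClosed (Set.range (Tmap u)) := by
  apply IsSeqClosed.isClosed
  intro ps z hps hlim
  choose p hp using hps
  have hTp : ∀ n, Tmap u (p n) = ps n := hp
  have hcauchy : CauchySeq (fun n => Tmap u (p n)) := by
    rw [show (fun n => Tmap u (p n)) = ps from funext hTp]
    exact hlim.cauchySeq
  have hpc : CauchySeq p := by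
    rw [Metric.cauchySeq_iff] at hcauchy ⊢
    intro ε hε
    obtain ⟨N, hN⟩ := hcauchy (ε / 2) (by linarith)
    refine ⟨N, fun m hm n hn => ?_⟩
    have := Tmap_dist' hu hpos hdet (p m) (p n)
    have h2 := hN m hm n hn
    calc dist (p m) (p n) ≤ 2 * dist (Tmap u (p m)) (Tmap u (p n)) := this
      _ < 2 * (ε / 2) := by linarith
      _ = ε := by ring
  obtain ⟨q, hq⟩ := cauchySeq_tendsto_of_complete hpc
  refine ⟨q, ?_⟩
  have hcont : Continuous (Tmap u) := (Tmap_contDiff hu).continuous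
  have : Filter.Tendsto (fun n => Tmap u (p n)) Filter.atTop (nhds (Tmap u q)) :=
    (hcont.continuousAt.tendsto.comp hq)
  rw [show (fun n => Tmap u (p n)) = ps from funext hTp] at this
  exact tendsto_nhds_unique this hlim

end Core
end JorgensAux

namespace JorgensAux
open Set

/-- explicit 2x2 continuous linear map on ℝ² -/
noncomputable def clm2 (a b c d : ℝ) : ℝ × ℝ →L[ℝ] ℝ × ℝ :=
  (a • ContinuousLinearMap.fst ℝ ℝ ℝ + b • ContinuousLinearMap.snd ℝ ℝ ℝ).prod
    (c • ContinuousLinearMap.fst ℝ ℝ ℝ + d • ContinuousLinearMap.snd ℝ ℝ ℝ)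

@[simp] lemma clm2_apply (a b c d : ℝ) (v : ℝ × ℝ) :
    clm2 a b c d v = (a * v.1 + b * v.2, c * v.1 + d * v.2) := by
  simp [clm2, smul_eq_mul]

/-- explicit 2x2 continuous linear equivalence on ℝ² -/
noncomputable def mk2 (a b c d : ℝ) (h : a * d - b * c ≠ 0) : (ℝ × ℝ) ≃L[ℝ] ℝ × ℝ :=
  LinearEquiv.toContinuousLinearEquiv <|
    LinearEquiv.ofLinear (clm2 a b c d).toLinearMap
      (clm2 (d / (a * d - b * c)) (-b / (a * d - b * c))
        (-c / (a * d - b * c)) (a / (a * d - b * c))).toLinearMap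
      (by
        apply LinearMap.ext; intro v
        apply Prod.ext
        · have hi := mul_inv_cancel₀ h; simp [clm2, smul_eq_mul]
          linear_combination v.1 * hi
        · have hi := mul_inv_cancel₀ h; simp [clm2, smul_eq_mul]
          linear_combination v.2 * hi)
      (by
        apply LinearMap.ext; intro v
        apply Prod.ext
        · have hi := mul_inv_cancel₀ h; simp [clm2, smul_eq_mul]
          linear_combination v.1 * hi
        · have hi := mul_inv_cancel₀ h; simp [clm2, smul_eq_mul]
          linear_combination v.2 * hi)

@[simp] lemma mk2_apply (a b c d : ℝ) (h : a * d - b * c ≠ 0) (v : ℝ × ℝ) :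
    mk2 a b c d h v = (a * v.1 + b * v.2, c * v.1 + d * v.2) := rfl

lemma mk2_coe (a b c d : ℝ) (h : a * d - b * c ≠ 0) :
    ((mk2 a b c d h : (ℝ × ℝ) ≃L[ℝ] ℝ × ℝ) : ℝ × ℝ →L[ℝ] ℝ × ℝ) = clm2 a b c d := by
  apply ContinuousLinearMap.ext; intro v
  simp [mk2_apply]

section Core2

variable {u : ℝ × ℝ → ℝ} (hu : ContDiff ℝ (⊤ : ℕ∞) u)
  (hpos : ∀ p, 0 < d1 (d1 u) p)
  (hdet : ∀ p, d1 (d1 u) p * d2 (d2 u) p - (d2 (d1 u) p) ^ 2 = 1)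

include hpos hdet in
lemma tpos : ∀ p, 0 < d2 (d2 u) p := by
  intro p
  nlinarith [hpos p, hdet p, sq_nonneg (d2 (d1 u) p)]

include hpos hdet in
lemma detTpos : ∀ p, 0 < (1 + d1 (d1 u) p) * (1 + d2 (d2 u) p) - d2 (d1 u) p ^ 2 := by
  intro p
  nlinarith [hpos p, tpos hpos hdet p, hdet p]

/-- the derivative of the Lewy map as an equivalence -/
noncomputable def Aequiv (p : ℝ × ℝ) : (ℝ × ℝ) ≃L[ℝ] ℝ × ℝ :=
  mk2 (1 + d1 (d1 u) p) (d2 (d1 u) p) (d2 (d1 u) p) (1 + d2 (d2 u) p)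
    (by
      have := detTpos hpos hdet p
      nlinarith [this])

include hu in
lemma hasFDerivAt_Tmap (p : ℝ × ℝ) :
    HasFDerivAt (Tmap u)
      (clm2 (1 + d1 (d1 u) p) (d2 (d1 u) p) (d2 (d1 u) p) (1 + d2 (d2 u) p)) p := by
  have hd1 := (contDiff_dv hu ((1 : ℝ), (0 : ℝ))).differentiable (by simp)
  have hd2 := (contDiff_dv hu ((0 : ℝ), (1 : ℝ))).differentiable (by simp)
  have h1 : HasFDerivAt (fun q : ℝ × ℝ => q.1 + d1 u q)
      (ContinuousLinearMap.fst ℝ ℝ ℝ + fderiv ℝ (d1 u) p) p :=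
    (hasFDerivAt_fst.add ((hd1 p).hasFDerivAt))
  have h2 : HasFDerivAt (fun q : ℝ × ℝ => q.2 + d2 u q)
      (ContinuousLinearMap.snd ℝ ℝ ℝ + fderiv ℝ (d2 u) p) p :=
    (hasFDerivAt_snd.add ((hd2 p).hasFDerivAt))
  have h := h1.prodMk h2
  have heq : ((ContinuousLinearMap.fst ℝ ℝ ℝ + fderiv ℝ (d1 u) p).prod
      (ContinuousLinearMap.snd ℝ ℝ ℝ + fderiv ℝ (d2 u) p))
      = clm2 (1 + d1 (d1 u) p) (d2 (d1 u) p) (d2 (d1 u) p) (1 + d2 (d2 u) p) := by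
    apply ContinuousLinearMap.ext; intro v
    apply Prod.ext
    · simp only [ContinuousLinearMap.prod_apply, ContinuousLinearMap.add_apply,
        ContinuousLinearMap.coe_fst', clm2_apply]
      rw [fderiv_apply_eq (hd1 p) v]; ring
    · simp only [ContinuousLinearMap.prod_apply, ContinuousLinearMap.add_apply,
        ContinuousLinearMap.coe_snd', clm2_apply]
      rw [fderiv_apply_eq (hd2 p) v]
      linear_combination v.1 * (dv_comm hu ((0:ℝ), (1:ℝ)) ((1:ℝ), (0:ℝ)) p)
  rwa [heq] at h

include hu hpos hdet in
lemma Tmap_strict (p : ℝ × ℝ) :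
    HasStrictFDerivAt (Tmap u)
      ((Aequiv hpos hdet p : (ℝ × ℝ) ≃L[ℝ] ℝ × ℝ) : ℝ × ℝ →L[ℝ] ℝ × ℝ) p := by
  apply (Tmap_contDiff hu).contDiffAt.hasStrictFDerivAt' _ (by simp)
  rw [Aequiv, mk2_coe]
  exact hasFDerivAt_Tmap hu p

include hu hpos hdet in
lemma Tmap_range_open : IsOpen (Set.range (Tmap u)) := by
  rw [isOpen_iff_forall_mem_open]
  rintro z ⟨p, rfl⟩
  refine ⟨((Tmap_strict hu hpos hdet p).toOpenPartialHomeomorph (Tmap u)).target, ?_, 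
    ((Tmap_strict hu hpos hdet p).toOpenPartialHomeomorph (Tmap u)).open_target,
    (Tmap_strict hu hpos hdet p).image_mem_toOpenPartialHomeomorph_target⟩
  intro w hw
  have himg := ((Tmap_strict hu hpos hdet p).toOpenPartialHomeomorph (Tmap u)).image_source_eq_target
  rw [← himg] at hw
  obtain ⟨q, _, hq⟩ := hw
  rw [(Tmap_strict hu hpos hdet p).toOpenPartialHomeomorph_coe] at hq
  exact ⟨q, hq⟩

include hu hpos hdet in
lemma Tmap_surj : Function.Surjective (Tmap u) := by
  intro z
  have h : Set.range (Tmap u) = Set.univ :=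
    IsClopen.eq_univ ⟨Tmap_range_closed hu hpos hdet, Tmap_range_open hu hpos hdet⟩
      ⟨Tmap u 0, Set.mem_range_self 0⟩
  have : z ∈ Set.range (Tmap u) := h ▸ Set.mem_univ z
  exact this

/-- the global inverse of the Lewy map -/
noncomputable def Smap (u : ℝ × ℝ → ℝ) : ℝ × ℝ → ℝ × ℝ := Function.invFun (Tmap u)

include hu hpos hdet in
lemma Tmap_Smap (z : ℝ × ℝ) : Tmap u (Smap u z) = z :=
  Function.invFun_eq (Tmap_surj hu hpos hdet z)

include hu hpos hdet in
lemma Smap_Tmap (p : ℝ × ℝ) : Smap u (Tmap u p) = p :=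
  Function.leftInverse_invFun (Tmap_inj hu hpos hdet) p

include hu hpos hdet in
lemma hasFDerivAt_Smap (p : ℝ × ℝ) :
    HasFDerivAt (Smap u)
      (((Aequiv hpos hdet p).symm : ℝ × ℝ →L[ℝ] ℝ × ℝ)) (Tmap u p) := by
  have hstrict := Tmap_strict hu hpos hdet p
  have hli := hstrict.to_localInverse
  have heq : Smap u =ᶠ[nhds (Tmap u p)] hstrict.localInverse (Tmap u) _ p := by
    filter_upwards [hstrict.eventually_right_inverse] with z hz
    calc Smap u z = Smap u (Tmap u (hstrict.localInverse (Tmap u) _ p z)) := by rw [hz]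
      _ = hstrict.localInverse (Tmap u) _ p z := Smap_Tmap hu hpos hdet _
  exact hli.hasFDerivAt.congr_of_eventuallyEq heq

end Core2
end JorgensAux

namespace JorgensAux
open Complex

/-- the map whose composition with `Smap` is holomorphic -/
noncomputable def Phimap (u : ℝ × ℝ → ℝ) (p : ℝ × ℝ) : ℝ × ℝ :=
  (p.1 - d1 u p, d2 u p - p.2)

/-- the derivative of the holomorphic function, as a function of the point in the domain of `u` -/
noncomputable def cval (u : ℝ × ℝ → ℝ) (p : ℝ × ℝ) : ℂ :=
  (((d2 (d2 u) p - d1 (d1 u) p) / (2 + d1 (d1 u) p + d2 (d2 u) p) : ℝ) : ℂ)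
    + ((2 * d2 (d1 u) p / (2 + d1 (d1 u) p + d2 (d2 u) p) : ℝ) : ℂ) * Complex.I

/-- the holomorphic function -/
noncomputable def Fhol (u : ℝ × ℝ → ℝ) (z : ℂ) : ℂ :=
  Complex.equivRealProdCLM.symm (Phimap u (Smap u (Complex.equivRealProdCLM z)))

section Core3

variable {u : ℝ × ℝ → ℝ} (hu : ContDiff ℝ (⊤ : ℕ∞) u)
  (hpos : ∀ p, 0 < d1 (d1 u) p)
  (hdet : ∀ p, d1 (d1 u) p * d2 (d2 u) p - (d2 (d1 u) p) ^ 2 = 1)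

include hpos hdet in
lemma Dpos (p : ℝ × ℝ) : 0 < 2 + d1 (d1 u) p + d2 (d2 u) p := by
  have := hpos p; have := tpos hpos hdet p; linarith

include hu in
lemma hasFDerivAt_Phimap (p : ℝ × ℝ) :
    HasFDerivAt (Phimap u)
      (clm2 (1 - d1 (d1 u) p) (-(d2 (d1 u) p)) (d2 (d1 u) p) (d2 (d2 u) p - 1)) p := by
  have hd1 := (contDiff_dv hu ((1 : ℝ), (0 : ℝ))).differentiable (by simp)
  have hd2 := (contDiff_dv hu ((0 : ℝ), (1 : ℝ))).differentiable (by simp)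
  have h1 : HasFDerivAt (fun q : ℝ × ℝ => q.1 - d1 u q)
      (ContinuousLinearMap.fst ℝ ℝ ℝ - fderiv ℝ (d1 u) p) p :=
    (hasFDerivAt_fst.sub ((hd1 p).hasFDerivAt))
  have h2 : HasFDerivAt (fun q : ℝ × ℝ => d2 u q - q.2)
      (fderiv ℝ (d2 u) p - ContinuousLinearMap.snd ℝ ℝ ℝ) p :=
    (((hd2 p).hasFDerivAt).sub hasFDerivAt_snd)
  have h := h1.prodMk h2
  have heq : ((ContinuousLinearMap.fst ℝ ℝ ℝ - fderiv ℝ (d1 u) p).prod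
      (fderiv ℝ (d2 u) p - ContinuousLinearMap.snd ℝ ℝ ℝ))
      = clm2 (1 - d1 (d1 u) p) (-(d2 (d1 u) p)) (d2 (d1 u) p) (d2 (d2 u) p - 1) := by
    apply ContinuousLinearMap.ext; intro v
    apply Prod.ext
    · simp only [ContinuousLinearMap.prod_apply, ContinuousLinearMap.sub_apply,
        ContinuousLinearMap.coe_fst', clm2_apply]
      rw [fderiv_apply_eq (hd1 p) v]; ring
    · simp only [ContinuousLinearMap.prod_apply, ContinuousLinearMap.sub_apply,
        ContinuousLinearMap.coe_snd', clm2_apply]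
      rw [fderiv_apply_eq (hd2 p) v]
      linear_combination v.1 * (dv_comm hu ((0:ℝ), (1:ℝ)) ((1:ℝ), (0:ℝ)) p)
  rwa [heq] at h

include hpos hdet in
lemma Aequiv_symm_one (p : ℝ × ℝ) :
    (Aequiv hpos hdet p).symm ((1 : ℝ), (0 : ℝ))
      = ((1 + d2 (d2 u) p) / (2 + d1 (d1 u) p + d2 (d2 u) p),
          -(d2 (d1 u) p) / (2 + d1 (d1 u) p + d2 (d2 u) p)) := by
  have hD := Dpos hpos hdet p
  rw [ContinuousLinearEquiv.symm_apply_eq, Aequiv, mk2_apply]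
  have hD' : (2 : ℝ) + d1 (d1 u) p + d2 (d2 u) p ≠ 0 := ne_of_gt hD
  refine Prod.ext ?_ ?_
  · simp only []; field_simp; linear_combination -hdet p
  · simp only []; field_simp; ring

include hpos hdet in
lemma Aequiv_symm_I (p : ℝ × ℝ) :
    (Aequiv hpos hdet p).symm ((0 : ℝ), (1 : ℝ))
      = (-(d2 (d1 u) p) / (2 + d1 (d1 u) p + d2 (d2 u) p),
          (1 + d1 (d1 u) p) / (2 + d1 (d1 u) p + d2 (d2 u) p)) := by
  have hD := Dpos hpos hdet p
  rw [ContinuousLinearEquiv.symm_apply_eq, Aequiv, mk2_apply]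
  have hD' : (2 : ℝ) + d1 (d1 u) p + d2 (d2 u) p ≠ 0 := ne_of_gt hD
  refine Prod.ext ?_ ?_
  · simp only []; field_simp; ring
  · simp only []; field_simp
    linear_combination -hdet p

include hu hpos hdet in
lemma key_hasDerivAt (p : ℝ × ℝ) :
    HasDerivAt (Fhol u) (cval u p) (Complex.equivRealProdCLM.symm (Tmap u p)) := by
  set z₀ : ℂ := Complex.equivRealProdCLM.symm (Tmap u p) with hz₀
  have heCz₀ : Complex.equivRealProdCLM z₀ = Tmap u p :=
    Complex.equivRealProdCLM.apply_symm_apply _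
  set M := clm2 (1 - d1 (d1 u) p) (-(d2 (d1 u) p)) (d2 (d1 u) p) (d2 (d2 u) p - 1) with hM
  set L : ℂ →L[ℝ] ℂ :=
    ((Complex.equivRealProdCLM.symm : ℝ × ℝ →L[ℝ] ℂ)).comp
      (M.comp ((((Aequiv hpos hdet p).symm : ℝ × ℝ →L[ℝ] ℝ × ℝ)).comp
        (Complex.equivRealProdCLM : ℂ →L[ℝ] ℝ × ℝ)))
    with hL
  have h0 : HasFDerivAt (⇑Complex.equivRealProdCLM)
      (Complex.equivRealProdCLM : ℂ →L[ℝ] ℝ × ℝ) z₀ := Complex.equivRealProdCLM.hasFDerivAt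
  have h1 : HasFDerivAt (Smap u)
      (((Aequiv hpos hdet p).symm : ℝ × ℝ →L[ℝ] ℝ × ℝ)) (Complex.equivRealProdCLM z₀) := by
    rw [heCz₀]; exact hasFDerivAt_Smap hu hpos hdet p
  have hSp : Smap u (Complex.equivRealProdCLM z₀) = p := by
    rw [heCz₀]; exact Smap_Tmap hu hpos hdet p
  have h2 : HasFDerivAt (Phimap u) M (Smap u (Complex.equivRealProdCLM z₀)) := by
    rw [hSp]; exact hasFDerivAt_Phimap hu p
  have h3 : HasFDerivAt (⇑Complex.equivRealProdCLM.symm)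
      ((Complex.equivRealProdCLM.symm : ℝ × ℝ →L[ℝ] ℂ))
      (Phimap u (Smap u (Complex.equivRealProdCLM z₀))) :=
    Complex.equivRealProdCLM.symm.hasFDerivAt
  have hreal : HasFDerivAt (Fhol u) L z₀ := by
    have := h3.comp z₀ (h2.comp z₀ (h1.comp z₀ h0))
    exact this
  -- compute L on the basis
  have hD := Dpos hpos hdet p
  have hD' : (2 : ℝ) + d1 (d1 u) p + d2 (d2 u) p ≠ 0 := ne_of_gt hD
  have he1 : Complex.equivRealProdCLM (1 : ℂ) = ((1 : ℝ), (0 : ℝ)) := rfl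
  have heI : Complex.equivRealProdCLM Complex.I = ((0 : ℝ), (1 : ℝ)) := rfl
  have hL1 : L 1 = cval u p := by
    simp only [hL, ContinuousLinearMap.coe_comp', Function.comp_apply,
      ContinuousLinearEquiv.coe_coe]
    rw [he1, Aequiv_symm_one hpos hdet p, hM, clm2_apply,
      Complex.equivRealProdCLM_symm_apply, cval, Complex.ext_iff]
    constructor
    · simp only [Complex.add_re, Complex.ofReal_re, Complex.mul_re, Complex.I_re,
        Complex.ofReal_im, Complex.I_im, Complex.add_im, Complex.mul_im]
      field_simp; linear_combination -hdet p
    · simp only [Complex.add_re, Complex.ofReal_re, Complex.mul_re, Complex.I_re,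
        Complex.ofReal_im, Complex.I_im, Complex.add_im, Complex.mul_im]
      field_simp; ring
  have hLI : L Complex.I = cval u p * Complex.I := by
    simp only [hL, ContinuousLinearMap.coe_comp', Function.comp_apply,
      ContinuousLinearEquiv.coe_coe]
    rw [heI, Aequiv_symm_I hpos hdet p, hM, clm2_apply,
      Complex.equivRealProdCLM_symm_apply, cval, Complex.ext_iff]
    constructor
    · simp only [Complex.add_re, Complex.ofReal_re, Complex.mul_re, Complex.I_re,
        Complex.ofReal_im, Complex.I_im, Complex.add_im, Complex.mul_im]
      field_simp; ring
    · simp only [Complex.add_re, Complex.ofReal_re, Complex.mul_re, Complex.I_re,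
        Complex.ofReal_im, Complex.I_im, Complex.add_im, Complex.mul_im]
      field_simp
      linear_combination hdet p
  -- complex linearity
  have hres : (ContinuousLinearMap.smulRight (1 : ℂ →L[ℂ] ℂ) (cval u p)).restrictScalars ℝ
      = L := by
    apply ContinuousLinearMap.ext; intro v
    have hv : v = v.re • (1 : ℂ) + v.im • Complex.I := by
      rw [Complex.real_smul, Complex.real_smul, mul_one, Complex.re_add_im]
    show (ContinuousLinearMap.smulRight (1 : ℂ →L[ℂ] ℂ) (cval u p)) v = L v
    rw [ContinuousLinearMap.smulRight_apply, ContinuousLinearMap.one_apply]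
    conv_rhs => rw [hv]
    rw [map_add, map_smul, map_smul, hL1, hLI]
    simp only [Complex.real_smul, smul_eq_mul]
    conv_lhs => rw [hv]
    simp only [Complex.real_smul, smul_eq_mul]
    ring
  have hC : HasFDerivAt (Fhol u)
      (ContinuousLinearMap.smulRight (1 : ℂ →L[ℂ] ℂ) (cval u p)) z₀ :=
    hasFDerivAt_of_restrictScalars ℝ hreal hres
  exact hasDerivAt_iff_hasFDerivAt.mpr hC

end Core3
end JorgensAux

namespace JorgensAux
open Complex Bornology

section Core4

variable {u : ℝ × ℝ → ℝ} (hu : ContDiff ℝ (⊤ : ℕ∞) u)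
  (hpos : ∀ p, 0 < d1 (d1 u) p)
  (hdet : ∀ p, d1 (d1 u) p * d2 (d2 u) p - (d2 (d1 u) p) ^ 2 = 1)

include hpos hdet in
lemma cval_norm_le (p : ℝ × ℝ) : ‖cval u p‖ ≤ 1 := by
  have hD := Dpos hpos hdet p
  have hD' : (2 : ℝ) + d1 (d1 u) p + d2 (d2 u) p ≠ 0 := ne_of_gt hD
  rw [← pow_le_one_iff_of_nonneg (norm_nonneg _) two_ne_zero]
  have h2 : ‖cval u p‖ ^ 2
      = ((d2 (d2 u) p - d1 (d1 u) p) / (2 + d1 (d1 u) p + d2 (d2 u) p)) ^ 2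
        + (2 * d2 (d1 u) p / (2 + d1 (d1 u) p + d2 (d2 u) p)) ^ 2 := by
    rw [Complex.sq_norm, Complex.normSq_apply, cval]
    simp only [Complex.add_re, Complex.ofReal_re, Complex.mul_re, Complex.I_re,
      Complex.ofReal_im, Complex.I_im, Complex.add_im, Complex.mul_im]
    ring
  rw [h2, div_pow, div_pow, ← add_div, div_le_one (by positivity)]
  nlinarith [hpos p, tpos hpos hdet p, hdet p]

/-- the would-be derivative of `Fhol` as a function on ℂ -/
noncomputable def gval (u : ℝ × ℝ → ℝ) (z : ℂ) : ℂ :=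
  cval u (Smap u (Complex.equivRealProdCLM z))

include hu hpos hdet in
lemma gval_hasDerivAt (z : ℂ) : HasDerivAt (Fhol u) (gval u z) z := by
  have h := key_hasDerivAt hu hpos hdet (Smap u (Complex.equivRealProdCLM z))
  rw [Tmap_Smap hu hpos hdet, ContinuousLinearEquiv.symm_apply_apply] at h
  exact h

include hu hpos hdet in
lemma cval_const (p q : ℝ × ℝ) : cval u p = cval u q := by
  have hFdiff : Differentiable ℂ (Fhol u) :=
    fun z => (gval_hasDerivAt hu hpos hdet z).differentiableAt
  have hderivF : deriv (Fhol u) = gval u :=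
    funext fun z => (gval_hasDerivAt hu hpos hdet z).deriv
  have hgdiff : Differentiable ℂ (gval u) := by
    rw [← hderivF]
    intro z
    have h2 : DifferentiableAt ℂ (fderiv ℂ (Fhol u)) z :=
      ((hFdiff.analyticAt z).fderiv).differentiableAt
    have h3 : deriv (Fhol u) = fun w => fderiv ℂ (Fhol u) w 1 := rfl
    rw [h3]
    exact h2.clm_apply (differentiableAt_const _)
  have hbdd : IsBounded (Set.range (gval u)) := by
    rw [isBounded_iff_forall_norm_le]
    exact ⟨1, by rintro _ ⟨z, rfl⟩; exact cval_norm_le hpos hdet _⟩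
  have hconst := hgdiff.apply_eq_apply_of_bounded hbdd
    (Complex.equivRealProdCLM.symm (Tmap u p)) (Complex.equivRealProdCLM.symm (Tmap u q))
  simpa only [gval, ContinuousLinearEquiv.apply_symm_apply,
    Smap_Tmap hu hpos hdet] using hconst

include hu hpos hdet in
lemma hessian_const : ∃ r0 s0 t0 : ℝ, r0 * t0 - s0 ^ 2 = 1 ∧ 0 < r0 ∧
    ∀ p, d1 (d1 u) p = r0 ∧ d2 (d1 u) p = s0 ∧ d2 (d2 u) p = t0 := by
  set a0 := (cval u (0, 0)).re with ha0
  set b0 := (cval u (0, 0)).im with hb0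
  have hre : ∀ p, (d2 (d2 u) p - d1 (d1 u) p) / (2 + d1 (d1 u) p + d2 (d2 u) p) = a0 := by
    intro p
    have h := congrArg Complex.re (cval_const hu hpos hdet p (0, 0))
    simp only [cval, Complex.add_re, Complex.ofReal_re, Complex.mul_re, Complex.I_re,
      Complex.ofReal_im, Complex.I_im, mul_zero, zero_mul, mul_one, sub_zero,
      add_zero] at h
    rw [h, ha0, cval]
    simp only [Complex.add_re, Complex.ofReal_re, Complex.mul_re, Complex.I_re,
      Complex.ofReal_im, Complex.I_im, mul_zero, zero_mul, mul_one, sub_zero, add_zero]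
  have him : ∀ p, 2 * d2 (d1 u) p / (2 + d1 (d1 u) p + d2 (d2 u) p) = b0 := by
    intro p
    have h := congrArg Complex.im (cval_const hu hpos hdet p (0, 0))
    simp only [cval, Complex.add_im, Complex.ofReal_im, Complex.mul_im, Complex.I_im,
      Complex.ofReal_re, Complex.I_re, mul_zero, zero_mul, mul_one, zero_add,
      add_zero] at h
    rw [h, hb0, cval]
    simp only [Complex.add_im, Complex.ofReal_im, Complex.mul_im, Complex.I_im,
      Complex.ofReal_re, Complex.I_re, mul_zero, zero_mul, mul_one, zero_add, add_zero]
  set m := a0 ^ 2 + b0 ^ 2 with hm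
  have hDm : ∀ p, (2 + d1 (d1 u) p + d2 (d2 u) p) * (1 - m) = 4 := by
    intro p
    have hD := Dpos hpos hdet p
    have hD' : (2 : ℝ) + d1 (d1 u) p + d2 (d2 u) p ≠ 0 := ne_of_gt hD
    have h1 : (d2 (d2 u) p - d1 (d1 u) p) = a0 * (2 + d1 (d1 u) p + d2 (d2 u) p) := by
      have := hre p; field_simp at this; linarith
    have h2 : 2 * d2 (d1 u) p = b0 * (2 + d1 (d1 u) p + d2 (d2 u) p) := by
      have := him p; field_simp at this; linarith
    have hsq : (2 + d1 (d1 u) p + d2 (d2 u) p) *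
        ((2 + d1 (d1 u) p + d2 (d2 u) p) * (1 - m) - 4) = 0 := by
      linear_combination
        ((d2 (d2 u) p - d1 (d1 u) p) + a0 * (2 + d1 (d1 u) p + d2 (d2 u) p)) * h1
        + (2 * d2 (d1 u) p + b0 * (2 + d1 (d1 u) p + d2 (d2 u) p)) * h2
        + (4 - 2 * m + 2 * a0 ^ 2 + 2 * b0 ^ 2) * hdet p
        + (-(6 + 4 * d2 (d2 u) p + d2 (d2 u) p ^ 2 + 2 * d2 (d1 u) p ^ 2
            + 4 * d1 (d1 u) p + d1 (d1 u) p ^ 2)) * hm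
    rcases mul_eq_zero.mp hsq with h | h
    · exact absurd h hD'
    · linarith
  have hm1 : (1 : ℝ) - m ≠ 0 := by
    intro h
    have := hDm (0, 0)
    rw [h, mul_zero] at this
    norm_num at this
  set D0 : ℝ := 4 / (1 - m) with hD0
  have hDconst : ∀ p, 2 + d1 (d1 u) p + d2 (d2 u) p = D0 := by
    intro p
    rw [hD0, eq_div_iff hm1]
    exact hDm p
  have hall : ∀ p, d1 (d1 u) p = (D0 - 2 - a0 * D0) / 2 ∧
      d2 (d1 u) p = b0 * D0 / 2 ∧ d2 (d2 u) p = (D0 - 2 + a0 * D0) / 2 := by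
    intro p
    have hD0' : D0 ≠ 0 := by
      rw [← hDconst p]; exact ne_of_gt (Dpos hpos hdet p)
    have h1 : d2 (d2 u) p - d1 (d1 u) p = a0 * D0 := by
      have := hre p; rw [hDconst p] at this
      field_simp at this; linarith
    have h2 : 2 * d2 (d1 u) p = b0 * D0 := by
      have := him p; rw [hDconst p] at this
      field_simp at this; linarith
    have h3 : 2 + d1 (d1 u) p + d2 (d2 u) p = D0 := hDconst p
    refine ⟨by linarith, by linarith, by linarith⟩
  refine ⟨(D0 - 2 - a0 * D0) / 2, b0 * D0 / 2, (D0 - 2 + a0 * D0) / 2, ?_, ?_, hall⟩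
  · have h := hdet (0, 0)
    rw [(hall (0, 0)).1, (hall (0, 0)).2.1, (hall (0, 0)).2.2] at h
    exact h
  · have h := hpos (0, 0)
    rw [(hall (0, 0)).1] at h
    exact h

end Core4
end JorgensAux

namespace JorgensAux

section Quad

variable {u : ℝ × ℝ → ℝ} (hu : ContDiff ℝ (⊤ : ℕ∞) u)

include hu in
lemma affine_of_dv_const {g : ℝ × ℝ → ℝ} (hg : ContDiff ℝ (⊤ : ℕ∞) g) {A B : ℝ}
    (h1 : ∀ p, d1 g p = A) (h2 : ∀ p, d2 g p = B) :
    ∀ p : ℝ × ℝ, g p = A * p.1 + B * p.2 + g (0, 0) := by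
  intro p
  set w : ℝ × ℝ → ℝ := fun q => g q - (A * q.1 + B * q.2) with hw
  have hlin : ∀ q : ℝ × ℝ, HasFDerivAt (fun q : ℝ × ℝ => A * q.1 + B * q.2)
      (A • ContinuousLinearMap.fst ℝ ℝ ℝ + B • ContinuousLinearMap.snd ℝ ℝ ℝ) q := by
    intro q
    have ha : HasFDerivAt (fun q : ℝ × ℝ => q.1) (ContinuousLinearMap.fst ℝ ℝ ℝ) q :=
      hasFDerivAt_fst
    have hb : HasFDerivAt (fun q : ℝ × ℝ => q.2) (ContinuousLinearMap.snd ℝ ℝ ℝ) q :=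
      hasFDerivAt_snd
    exact (ha.const_mul A).add (hb.const_mul B)
  have hgd : ∀ q, HasFDerivAt g
      (A • ContinuousLinearMap.fst ℝ ℝ ℝ + B • ContinuousLinearMap.snd ℝ ℝ ℝ) q := by
    intro q
    have hdiff : DifferentiableAt ℝ g q := (hg.differentiable (by simp)) q
    have := hdiff.hasFDerivAt
    convert this using 1
    apply ContinuousLinearMap.ext; intro v
    have := fderiv_apply_eq hdiff v
    simp only [ContinuousLinearMap.add_apply, ContinuousLinearMap.coe_smul',
      Pi.smul_apply, ContinuousLinearMap.coe_fst', ContinuousLinearMap.coe_snd',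
      smul_eq_mul, this, h1 q, h2 q]
    ring
  have hwd : ∀ q : ℝ × ℝ, HasFDerivAt w (0 : ℝ × ℝ →L[ℝ] ℝ) q := by
    intro q
    have := (hgd q).sub (hlin q)
    rw [sub_self] at this; exact this
  have hconst : w p = w (0, 0) :=
    is_const_of_fderiv_eq_zero (fun q => (hwd q).differentiableAt)
      (fun q => (hwd q).fderiv) p (0, 0)
  simp only [hw] at hconst
  simp only [mul_zero, add_zero, sub_zero] at hconst
  linarith [hconst]

include hu in
lemma quadratic_of_hessian_const {r0 s0 t0 : ℝ}
    (h : ∀ p, d1 (d1 u) p = r0 ∧ d2 (d1 u) p = s0 ∧ d2 (d2 u) p = t0) :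
    ∃ d e g0 : ℝ, ∀ p : ℝ × ℝ,
      u p = r0 / 2 * p.1 ^ 2 + s0 * p.1 * p.2 + t0 / 2 * p.2 ^ 2
        + d * p.1 + e * p.2 + g0 := by
  have hd1c := contDiff_dv hu ((1 : ℝ), (0 : ℝ))
  have hd2c := contDiff_dv hu ((0 : ℝ), (1 : ℝ))
  -- first partials are affine
  have hu1 : ∀ p : ℝ × ℝ, d1 u p = r0 * p.1 + s0 * p.2 + d1 u (0, 0) :=
    affine_of_dv_const hu hd1c (fun p => (h p).1) (fun p => (h p).2.1)
  have hu2 : ∀ p : ℝ × ℝ, d2 u p = s0 * p.1 + t0 * p.2 + d2 u (0, 0) := by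
    apply affine_of_dv_const hu hd2c
    · intro p
      rw [show d1 (d2 u) p = d2 (d1 u) p from dv_comm hu _ _ _]
      exact (h p).2.1
    · intro p; exact (h p).2.2
  set d := d1 u (0, 0) with hd
  set e := d2 u (0, 0) with he
  refine ⟨d, e, u (0, 0), ?_⟩
  intro p
  set P : ℝ × ℝ → ℝ := fun q => r0 / 2 * q.1 ^ 2 + s0 * q.1 * q.2 + t0 / 2 * q.2 ^ 2
    + d * q.1 + e * q.2 with hP
  have hPd : ∀ q : ℝ × ℝ, HasFDerivAt P
      ((r0 * q.1 + s0 * q.2 + d) • ContinuousLinearMap.fst ℝ ℝ ℝ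
        + (s0 * q.1 + t0 * q.2 + e) • ContinuousLinearMap.snd ℝ ℝ ℝ) q := by
    intro q
    have h1 : HasFDerivAt (fun q : ℝ × ℝ => q.1) (ContinuousLinearMap.fst ℝ ℝ ℝ) q :=
      hasFDerivAt_fst
    have h2 : HasFDerivAt (fun q : ℝ × ℝ => q.2) (ContinuousLinearMap.snd ℝ ℝ ℝ) q :=
      hasFDerivAt_snd
    have hsq1 : HasFDerivAt (fun q : ℝ × ℝ => q.1 * q.1) _ q := h1.mul h1
    have hsq2 : HasFDerivAt (fun q : ℝ × ℝ => q.2 * q.2) _ q := h2.mul h2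
    have hcross : HasFDerivAt (fun q : ℝ × ℝ => q.1 * q.2) _ q := h1.mul h2
    have hbig := ((((((hsq1.const_mul (r0 / 2)).add (hcross.const_mul s0)).add
      (hsq2.const_mul (t0 / 2))).add (h1.const_mul d)).add (h2.const_mul e)))
    have : P = fun q : ℝ × ℝ => r0 / 2 * (q.1 * q.1) + s0 * (q.1 * q.2)
        + t0 / 2 * (q.2 * q.2) + d * q.1 + e * q.2 := by
      funext q; simp only [hP]; ring
    rw [this]
    refine HasFDerivAt.congr_fderiv hbig ?_
    apply ContinuousLinearMap.ext; intro v
    simp only [ContinuousLinearMap.add_apply, ContinuousLinearMap.coe_smul',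
      Pi.smul_apply, ContinuousLinearMap.coe_fst', ContinuousLinearMap.coe_snd',
      smul_eq_mul]
    ring
  have hud : ∀ q : ℝ × ℝ, HasFDerivAt u
      ((r0 * q.1 + s0 * q.2 + d) • ContinuousLinearMap.fst ℝ ℝ ℝ
        + (s0 * q.1 + t0 * q.2 + e) • ContinuousLinearMap.snd ℝ ℝ ℝ) q := by
    intro q
    have hdiff : DifferentiableAt ℝ u q := (hu.differentiable (by simp)) q
    convert hdiff.hasFDerivAt using 1
    apply ContinuousLinearMap.ext; intro v
    have := fderiv_apply_eq hdiff v
    simp only [ContinuousLinearMap.add_apply, ContinuousLinearMap.coe_smul',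
      Pi.smul_apply, ContinuousLinearMap.coe_fst', ContinuousLinearMap.coe_snd',
      smul_eq_mul, this, hu1 q, hu2 q]
    ring
  have hwd : ∀ q : ℝ × ℝ, HasFDerivAt (fun q => u q - P q) (0 : ℝ × ℝ →L[ℝ] ℝ) q := by
    intro q
    have := (hud q).sub (hPd q)
    rw [sub_self] at this; exact this
  have hconst : u p - P p = u (0, 0) - P (0, 0) :=
    is_const_of_fderiv_eq_zero (fun q => (hwd q).differentiableAt)
      (fun q => (hwd q).fderiv) p (0, 0)
  have hP0 : P (0, 0) = 0 := by simp [hP]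
  rw [hP0] at hconst
  simp only [hP] at hconst ⊢
  linarith [hconst]

end Quad
end JorgensAux

namespace JorgensAux

lemma dv_const_mul {u : ℝ × ℝ → ℝ} (hu : ContDiff ℝ (⊤ : ℕ∞) u) (c : ℝ) (w : ℝ × ℝ) :
    dv w (fun p => c * u p) = fun p => c * dv w u p := by
  funext p
  simp only [dv]
  rw [fderiv_const_mul ((hu.differentiable (by simp)) p) c]
  simp

lemma sign_dichotomy {u : ℝ × ℝ → ℝ} (hu : ContDiff ℝ (⊤ : ℕ∞) u) {K : ℝ} (hK0 : 0 < K)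
    (hdetu : ∀ p, d1 (d1 u) p * d2 (d2 u) p - (d2 (d1 u) p) ^ 2 = K) :
    (∀ p, 0 < d1 (d1 u) p) ∨ (∀ p, d1 (d1 u) p < 0) := by
  have hnz : ∀ p, d1 (d1 u) p ≠ 0 := by
    intro p h
    have := hdetu p
    rw [h] at this
    nlinarith [sq_nonneg (d2 (d1 u) p)]
  have hcont : Continuous (d1 (d1 u)) :=
    (contDiff_dv (contDiff_dv hu ((1:ℝ),(0:ℝ))) ((1:ℝ),(0:ℝ))).continuous
  have hA : IsOpen {p : ℝ × ℝ | 0 < d1 (d1 u) p} := isOpen_lt continuous_const hcont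
  have hB : IsOpen {p : ℝ × ℝ | d1 (d1 u) p < 0} := isOpen_lt hcont continuous_const
  have hcomp : {p : ℝ × ℝ | 0 < d1 (d1 u) p}ᶜ = {p : ℝ × ℝ | d1 (d1 u) p < 0} := by
    ext p
    simp only [Set.mem_compl_iff, Set.mem_setOf_eq, not_lt]
    constructor
    · intro h; exact lt_of_le_of_ne h (hnz p)
    · intro h; linarith
  by_cases h00 : 0 < d1 (d1 u) (0, 0)
  · left
    have hclosed : IsClosed {p : ℝ × ℝ | 0 < d1 (d1 u) p} := by
      rw [← isOpen_compl_iff, hcomp]; exact hB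
    have := IsClopen.eq_univ ⟨hclosed, hA⟩ ⟨(0, 0), h00⟩
    intro p
    exact Set.eq_univ_iff_forall.mp this p
  · right
    have h00' : d1 (d1 u) (0, 0) < 0 :=
      lt_of_le_of_ne (not_lt.mp h00) (hnz (0, 0))
    have hclosed : IsClosed {p : ℝ × ℝ | d1 (d1 u) p < 0} := by
      rw [← isOpen_compl_iff, ← hcomp, compl_compl]; exact hA
    have := IsClopen.eq_univ ⟨hclosed, hB⟩ ⟨(0, 0), h00'⟩
    intro p
    exact Set.eq_univ_iff_forall.mp this p

lemma quad_of_scale {u : ℝ × ℝ → ℝ} (hu : ContDiff ℝ (⊤ : ℕ∞) u) (c : ℝ)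
    (hcpos : ∀ p, 0 < c * d1 (d1 u) p)
    (hcdet : ∀ p, (c * d1 (d1 u) p) * (c * d2 (d2 u) p) - (c * d2 (d1 u) p) ^ 2 = 1) :
    ∃ r0 s0 t0 d e g0 : ℝ, r0 * t0 - s0 ^ 2 = 1 ∧
      ∀ p : ℝ × ℝ, c * u p = r0 / 2 * p.1 ^ 2 + s0 * p.1 * p.2 + t0 / 2 * p.2 ^ 2
        + d * p.1 + e * p.2 + g0 := by
  set v : ℝ × ℝ → ℝ := fun p => c * u p with hv
  have hvc : ContDiff ℝ (⊤ : ℕ∞) v := contDiff_const.mul hu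
  have e1 : d1 v = fun p => c * d1 u p := dv_const_mul hu c _
  have e2 : d2 v = fun p => c * d2 u p := dv_const_mul hu c _
  have e11 : d1 (d1 v) = fun p => c * d1 (d1 u) p := by
    rw [e1]; exact dv_const_mul (contDiff_dv hu _) c _
  have e12 : d2 (d1 v) = fun p => c * d2 (d1 u) p := by
    rw [e1]; exact dv_const_mul (contDiff_dv hu _) c _
  have e22 : d2 (d2 v) = fun p => c * d2 (d2 u) p := by
    rw [e2]; exact dv_const_mul (contDiff_dv hu _) c _
  have hpos_v : ∀ p, 0 < d1 (d1 v) p := by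
    intro p; rw [e11]; exact hcpos p
  have hdet_v : ∀ p, d1 (d1 v) p * d2 (d2 v) p - (d2 (d1 v) p) ^ 2 = 1 := by
    intro p; rw [e11, e12, e22]; exact hcdet p
  obtain ⟨r0, s0, t0, hdet1, _, hall⟩ := hessian_const hvc hpos_v hdet_v
  obtain ⟨d, e, g0, hform⟩ := quadratic_of_hessian_const hvc hall
  exact ⟨r0, s0, t0, d, e, g0, hdet1, hform⟩

end JorgensAux

theorem stmt_11 (f : ℝ → ℝ → ℝ) (K : ℝ) (hK0 : 0 < K)
    (hf : ContDiff ℝ (⊤ : ℕ∞) (Function.uncurry f))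
    (hK : ∀ x y : ℝ, Kgauss f x y = K) :
    (∃ a b c d e g : ℝ, ∀ x y : ℝ,
      f x y = a * x ^ 2 + b * x * y + c * y ^ 2 + d * x + e * y + g) ∧
    ∃ θ a b c α β : ℝ, α * β = K / 4 ∧ ∀ x y : ℝ,
      f (x * Real.cos θ - y * Real.sin θ) (x * Real.sin θ + y * Real.cos θ) =
        α * x ^ 2 + β * y ^ 2 + a * x + b * y + c := by
  classical
  open JorgensAux in
  -- translate the hypothesis to the uncurried function
  have hdetu : ∀ p : ℝ × ℝ,
      d1 (d1 (Function.uncurry f)) p * d2 (d2 (Function.uncurry f)) p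
        - (d2 (d1 (Function.uncurry f)) p) ^ 2 = K := by
    intro p
    have h := hK p.1 p.2
    rw [Kgauss, fxx_eq hf, fxy_eq hf, fyy_eq hf] at h
    exact h
  -- key step: f is a quadratic polynomial with Hessian determinant K
  have hquad : ∃ R S T d e g0 : ℝ, R * T - S ^ 2 = K ∧ ∀ x y : ℝ,
      f x y = R / 2 * x ^ 2 + S * x * y + T / 2 * y ^ 2 + d * x + e * y + g0 := by
    have hsK : Real.sqrt K > 0 := Real.sqrt_pos.mpr hK0
    have hsK2 : Real.sqrt K ^ 2 = K := Real.sq_sqrt hK0.le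
    rcases sign_dichotomy hf hK0 hdetu with hpos | hneg
    · -- positive case, scale by 1/√K
      set c : ℝ := 1 / Real.sqrt K with hc
      have hc0 : c > 0 := by positivity
      have hc2 : c ^ 2 * K = 1 := by
        rw [hc]; field_simp
        exact hsK2.symm
      obtain ⟨r0, s0, t0, d, e, g0, hdet1, hform⟩ :=
        quad_of_scale hf c
          (fun p => mul_pos hc0 (hpos p))
          (by
            intro p
            have := hdetu p
            nlinarith [this, hc2])
      refine ⟨r0 / c, s0 / c, t0 / c, d / c, e / c, g0 / c, ?_, ?_⟩
      · have hc0' : c ≠ 0 := ne_of_gt hc0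
        field_simp
        nlinarith [hdet1, hc2]
      · intro x y
        have h := hform (x, y)
        have hc0' : c ≠ 0 := ne_of_gt hc0
        have : f x y = (c * Function.uncurry f (x, y)) / c := by
          field_simp
          rfl
        rw [this, h]
        field_simp
    · -- negative case, scale by -1/√K
      set c : ℝ := -(1 / Real.sqrt K) with hc
      have hc0 : c < 0 := by
        rw [hc]; simp; positivity
      have hc2 : c ^ 2 * K = 1 := by
        rw [hc]; field_simp
        exact hsK2.symm
      obtain ⟨r0, s0, t0, d, e, g0, hdet1, hform⟩ :=
        quad_of_scale hf c
          (fun p => mul_pos_of_neg_of_neg hc0 (hneg p))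
          (by
            intro p
            have := hdetu p
            nlinarith [this, hc2])
      refine ⟨r0 / c, s0 / c, t0 / c, d / c, e / c, g0 / c, ?_, ?_⟩
      · have hc0' : c ≠ 0 := ne_of_lt hc0
        field_simp
        nlinarith [hdet1, hc2]
      · intro x y
        have h := hform (x, y)
        have hc0' : c ≠ 0 := ne_of_lt hc0
        have : f x y = (c * Function.uncurry f (x, y)) / c := by
          field_simp
          rfl
        rw [this, h]
        field_simp
  obtain ⟨R, S, T, d, e, g0, hRT, hform⟩ := hquad
  constructor
  · exact ⟨R / 2, S, T / 2, d, e, g0, fun x y => by rw [hform]⟩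
  · -- rotation to principal axes
    -- find θ with the cross term vanishing
    obtain ⟨θ, hχ⟩ : ∃ θ : ℝ, (T - R) * Real.sin θ * Real.cos θ
        + S * ((Real.cos θ) ^ 2 - (Real.sin θ) ^ 2) = 0 := by
      set φ : ℝ → ℝ := fun ψ => S * Real.cos ψ + ((T - R) / 2) * Real.sin ψ with hφ
      have hcont : Continuous φ := by
        apply Continuous.add
        · exact continuous_const.mul Real.continuous_cos
        · exact continuous_const.mul Real.continuous_sin
      have h0 : φ 0 = S := by simp [hφ]
      have hpi : φ Real.pi = -S := by simp [hφ]
      have hmem : (0 : ℝ) ∈ Set.uIcc (φ 0) (φ Real.pi) := by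
        rw [h0, hpi, Set.mem_uIcc]
        rcases le_total S 0 with h | h
        · left; exact ⟨h, by linarith⟩
        · right; exact ⟨by linarith, h⟩
      obtain ⟨ψ, _, hψ⟩ := intermediate_value_uIcc (f := φ) (a := 0) (b := Real.pi)
        hcont.continuousOn hmem
      refine ⟨ψ / 2, ?_⟩
      have h2θ : 2 * (ψ / 2) = ψ := by ring
      have hs2 : Real.sin ψ = 2 * Real.sin (ψ / 2) * Real.cos (ψ / 2) := by
        conv_lhs => rw [← h2θ]
        exact Real.sin_two_mul _
      have hc2 : Real.cos ψ = Real.cos (ψ / 2) ^ 2 - Real.sin (ψ / 2) ^ 2 := by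
        conv_lhs => rw [← h2θ]
        exact Real.cos_two_mul' _
      rw [hφ] at hψ
      simp only at hψ
      rw [hs2, hc2] at hψ
      linear_combination hψ
    set cθ := Real.cos θ
    set sθ := Real.sin θ
    have hpy : sθ ^ 2 + cθ ^ 2 = 1 := Real.sin_sq_add_cos_sq θ
    refine ⟨θ, d * cθ + e * sθ, -d * sθ + e * cθ, g0,
      R / 2 * cθ ^ 2 + S * cθ * sθ + T / 2 * sθ ^ 2,
      R / 2 * sθ ^ 2 - S * cθ * sθ + T / 2 * cθ ^ 2, ?_, ?_⟩
    · linear_combination ((sθ ^ 2 + cθ ^ 2) ^ 2 / 4) * hRT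
        + ((T * cθ * sθ - S * sθ ^ 2 + S * cθ ^ 2 - R * cθ * sθ) / 4) * hχ
        + ((K + K * sθ ^ 2 + K * cθ ^ 2) / 4) * hpy
    · intro x y
      rw [hform]
      linear_combination (x * y) * hχ
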